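/- arXiv:1604.05021 — 3 statements merged into one kernel-verified Lean document; each statement's English description precedes it below -/
import Mathlib

section
/- For every positive integer p, ⌊φ(2p + ⌊φp⌋)⌋ = p + ⌊φp⌋, where φ = (√5 − 1)/2. -/
/-!
Write `φ * p = ⌊φ * p⌋ + f` with `0 ≤ f < 1`. Since `φ² = 1 - φ`, one finds
`φ * (2p + ⌊φ * p⌋) = p + ⌊φ * p⌋ + φ² f`, and `0 ≤ φ² f < 1`.
-/

noncomputable def phi : ℝ := (Real.sqrt 5 - 1) / 2

theorem phi_eq_neg_goldenConj : phi = -Real.goldenConj := by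
  rw [phi, Real.goldenConj]
  ring

theorem phi_sq : phi ^ 2 = 1 - phi := by
  rw [phi_eq_neg_goldenConj, neg_sq, Real.goldenConj_sq]
  ring

theorem phi_pos : 0 < phi := by
  rw [phi_eq_neg_goldenConj]
  exact neg_pos.mpr Real.goldenConj_neg

theorem phi_lt_one : phi < 1 := by
  rw [phi_eq_neg_goldenConj]
  linarith [Real.neg_one_lt_goldenConj]

theorem phi_mul_two_mul_add_floor (x : ℝ) :
    phi * (2 * x + ⌊phi * x⌋) = x + ⌊phi * x⌋ + phi ^ 2 * Int.fract (phi * x) := by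
  rw [Int.fract]
  linear_combination (⌊phi * x⌋ - phi * x + x) * phi_sq

theorem floor_phi_sq_mul_fract (y : ℝ) : ⌊phi ^ 2 * Int.fract y⌋ = 0 := by
  have hphi_sq : phi ^ 2 < 1 := pow_lt_one₀ phi_pos.le phi_lt_one two_ne_zero
  rw [Int.floor_eq_zero_iff]
  constructor
  · positivity
  · calc phi ^ 2 * Int.fract y ≤ phi ^ 2 * 1 := by gcongr; exact (Int.fract_lt_one y).le
      _ < 1 := by linarith

theorem floor_phi_eq₄_general (p : ℕ) :
    ⌊phi * (2 * (p : ℝ) + (⌊phi * (p : ℝ)⌋ : ℝ))⌋ = (p : ℤ) + ⌊phi * (p : ℝ)⌋ := by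
  rw [phi_mul_two_mul_add_floor, add_assoc, Int.floor_natCast_add, Int.floor_intCast_add,
    floor_phi_sq_mul_fract, add_zero]

/-- For every positive integer `p`, `⌊φ(2p + ⌊φp⌋)⌋ = p + ⌊φp⌋`. -/
theorem floor_phi_eq₄ (p : ℕ) (hp : 1 ≤ p) :
    ⌊phi * (2 * (p : ℝ) + (⌊phi * (p : ℝ)⌋ : ℝ))⌋ = (p : ℤ) + ⌊phi * (p : ℝ)⌋ :=
  floor_phi_eq₄_general p
end

section
/- Define the sequence a(n) by a(1)=1, a(2)=1, a(3)=2, and for m ≥ 3 and 0 ≤ j ≤ f_{m−1}−1, a(f_m − 1 + j) = a(f_{m−2} − 1 + j) + 1. Then a(f_m − 1) = ⌊(m+1)/2⌋ and a(f_m) = ⌊(m+2)/2⌋ for all m ≥ 2, hence a(f_m − 1) + a(f_m) = m + 1. -/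
/-! Taking `j = 0` and `j = 1` in the block recursion gives `a (f_m - 1) = a (f_{m-2} - 1) + 1`
and `a f_m = a f_{m-2} + 1`, so both values grow by one every two steps of `m`. Since
`f_1 = 2` and `f_2 = 3`, the initial values `a 1 = a 2 = 1` and `a 3 = 2` start the two
interleaved progressions at `m = 1` and `m = 2`. -/

/-- Fibonacci numbers shifted: `fibF (m+2) = f_m` where `f_{-2}=0`, `f_{-1}=1`,
`f_m = f_{m-1} + f_{m-2}`. -/
def fibF : ℕ → ℕ
  | 0 => 0
  | 1 => 1
  | n + 2 => fibF (n + 1) + fibF n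

open Nat

theorem fibF_eq_fib : fibF = fib := by
  funext n
  induction n using Nat.twoStepInduction with
  | zero => rfl
  | one => rfl
  | more n ih₀ ih₁ => rw [fibF, ih₀, ih₁, fib_add_two, add_comm]

theorem apply_fib_add_two_of_shift {a : ℕ → ℕ} {m : ℕ} (hm : 2 ≤ m)
    (hshift : ∀ j < fib (m + 1), a (fib (m + 2) - 1 + j) = a (fib m - 1 + j) + 1) :
    a (fib (m + 2) - 1) = a (fib m - 1) + 1 ∧ a (fib (m + 2)) = a (fib m) + 1 := by
  have hfib_m : 0 < fib m := fib_pos.2 (by omega)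
  have hfib_m2 : 0 < fib (m + 2) := fib_pos.2 (by omega)
  have hfib_m1 : 2 ≤ fib (m + 1) := fib_mono (show 3 ≤ m + 1 by omega)
  have h₀ := hshift 0 (by omega)
  have h₁ := hshift 1 (by omega)
  rw [Nat.sub_add_cancel hfib_m2, Nat.sub_add_cancel hfib_m] at h₁
  exact ⟨h₀, h₁⟩

theorem apply_fib_sub_one_and_apply_fib {a : ℕ → ℕ} (h1 : a 1 = 1) (h2 : a 2 = 1) (h3 : a 3 = 2)
    (hrec : ∀ m : ℕ, 3 ≤ m → ∀ j < fib (m + 1),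
      a (fib (m + 2) - 1 + j) = a (fib m - 1 + j) + 1) (m : ℕ) (hm : 1 ≤ m) :
    a (fib (m + 2) - 1) = (m + 1) / 2 ∧ a (fib (m + 2)) = (m + 2) / 2 := by
  suffices ∀ n, 1 ≤ n → (a (fib (n + 2) - 1) = (n + 1) / 2 ∧ a (fib (n + 2)) = (n + 2) / 2) ∧
      (a (fib (n + 3) - 1) = (n + 2) / 2 ∧ a (fib (n + 3)) = (n + 3) / 2) from
    (this m hm).1
  intro n hn
  induction n, hn using Nat.le_induction with
  | base => exact ⟨⟨h1, h2⟩, h2, h3⟩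
  | succ n hn ih =>
    obtain ⟨⟨ih₀, ih₁⟩, ih₂⟩ := ih
    obtain ⟨e₀, e₁⟩ := apply_fib_add_two_of_shift (by omega) (hrec (n + 2) (by omega))
    refine ⟨ih₂, ?_, ?_⟩
    · rw [e₀, ih₀]; omega
    · rw [e₁, ih₁]; omega

/-- If `a 1 = 1`, `a 2 = 1`, `a 3 = 2`, and for `m ≥ 3` and `0 ≤ j ≤ f_{m-1} - 1`,
`a (f_m - 1 + j) = a (f_{m-2} - 1 + j) + 1` (with `f_i = fibF (i+2)`),
then `a (f_m - 1) = ⌊(m+1)/2⌋`, `a (f_m) = ⌊(m+2)/2⌋`, and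
`a (f_m - 1) + a (f_m) = m + 1` for all `m ≥ 2`. -/
theorem a_at_fib (a : ℕ → ℕ) (h1 : a 1 = 1) (h2 : a 2 = 1) (h3 : a 3 = 2)
    (hrec : ∀ m : ℕ, 3 ≤ m → ∀ j : ℕ, j < fibF (m + 1) →
      a (fibF (m + 2) - 1 + j) = a (fibF m - 1 + j) + 1) :
    ∀ m : ℕ, 2 ≤ m →
      a (fibF (m + 2) - 1) = (m + 1) / 2 ∧
      a (fibF (m + 2)) = (m + 2) / 2 ∧
      a (fibF (m + 2) - 1) + a (fibF (m + 2)) = m + 1 := by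
  rw [fibF_eq_fib] at hrec ⊢
  intro m hm
  obtain ⟨hprev, hat⟩ := apply_fib_sub_one_and_apply_fib h1 h2 h3 hrec m (by omega)
  exact ⟨hprev, hat, by omega⟩
end

section
/- A prefix T[1,n] of the Tribonacci word is a palindrome if and only if n = k_{m+4} − 2 for some m ≥ 1, where k are the kernel numbers k_0=0, k_1=k_2=1, k_m = k_{m−1}+k_{m−2}+k_{m−3}−1. -/
/-- Kernel numbers: `k_0 = 0`, `k_1 = k_2 = 1`, `k_m = k_{m-1}+k_{m-2}+k_{m-3}-1`. -/
def ker : ℕ → ℕ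
  | 0 => 0
  | 1 => 1
  | 2 => 1
  | n + 3 => ker (n + 2) + ker (n + 1) + ker n - 1

/-- The Tribonacci substitution `τ(a) = ab`, `τ(b) = ac`, `τ(c) = a`,
with `a = 0`, `b = 1`, `c = 2`. -/
def tribSub : Fin 3 → List (Fin 3) := fun x =>
  if x = 0 then [0, 1] else if x = 1 then [0, 2] else [0]

/-- Iterates `τ^m(a)`. -/
def tribList : ℕ → List (Fin 3)
  | 0 => [0]
  | n + 1 => (tribList n).flatMap tribSub

/-- The infinite Tribonacci word, the fixed point of `τ` beginning with `a = 0`. -/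
def tribWord (i : ℕ) : Fin 3 := (tribList (i + 1)).getD i 0

/-- The prefix `T[1,n]` of the Tribonacci word, of length `n`. -/
def tribPrefix (n : ℕ) : List (Fin 3) := (List.range n).map tribWord


/-!
The images `ab, ac, a` of `τ` form a suffix code, so `τ` is injective, and `τ(x)a` is a
palindrome for every letter `x`; hence `τ(w)a` is a palindrome iff `w` is. The letter `a` occurs
in `T` exactly at the positions `|τ(T[1,n])|` where the blocks `τ(T_n)` begin, and a palindromic
prefix ends with `a`, so it equals `τ(T[1,n])a` for a shorter palindromic prefix `T[1,n]`. Thus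
the palindromic prefixes are `P_0 = ε`, `P_{m+1} = τ(P_m)a`, and since `|τ w|_a = |w|` and
`|τ w|_b = |w|_a`, their lengths, `a`-counts and `b`-counts are `k_{m+4} - 2`, `k_{m+3} - 1`,
`k_{m+2} - 1`.
-/

open List

section Morphism

variable {α β : Type*} {f : α → List β}

theorem List.flatMap_injective_of_suffix_code (hne : ∀ x, f x ≠ [])
    (hcode : ∀ x y, f x <:+ f y → x = y) : Function.Injective (flatMap f) := by
  intro u
  induction u using List.reverseRecOn with
  | nil =>
    intro v h
    rcases v.eq_nil_or_concat' with rfl | ⟨v, y, rfl⟩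
    · rfl
    · simp [hne] at h
  | append_singleton u x ih =>
    intro v h
    rcases v.eq_nil_or_concat' with rfl | ⟨v, y, rfl⟩
    · simp [hne] at h
    simp only [flatMap_append, flatMap_singleton] at h
    have hxy : x = y := by
      rcases suffix_or_suffix_of_suffix (h ▸ suffix_append _ _) (suffix_append _ _) with hs | hs
      exacts [hcode x y hs, (hcode y x hs).symm]
    subst hxy
    rw [ih (append_cancel_right h)]

theorem List.reverse_flatMap_append_singleton {a : β} (hf : ∀ x, (f x ++ [a]).Palindrome)
    (w : List α) : (w.flatMap f ++ [a]).reverse = w.reverse.flatMap f ++ [a] := by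
  induction w with
  | nil => rfl
  | cons x w ih =>
    have hx : a :: (f x).reverse = f x ++ [a] := by simpa using (hf x).reverse_eq
    rw [flatMap_cons, append_assoc, reverse_append, ih, reverse_cons, flatMap_append,
      flatMap_singleton, append_assoc, singleton_append, hx, append_assoc]

theorem List.palindrome_flatMap_append_singleton_iff {a : β}
    (hf : ∀ x, (f x ++ [a]).Palindrome) (hinj : Function.Injective (flatMap f)) (w : List α) :
    (w.flatMap f ++ [a]).Palindrome ↔ w.Palindrome := by
  rw [Palindrome.iff_reverse_eq, Palindrome.iff_reverse_eq,
    reverse_flatMap_append_singleton hf, append_left_inj, hinj.eq_iff]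

end Morphism

local notation "τ" => List.flatMap tribSub

theorem tribSub_ne_nil (x : Fin 3) : tribSub x ≠ [] := by
  revert x; decide

theorem tau_injective : Function.Injective τ :=
  flatMap_injective_of_suffix_code tribSub_ne_nil (by decide)

theorem tribSub_append_zero_palindrome (x : Fin 3) : (tribSub x ++ [0]).Palindrome := by
  rw [Palindrome.iff_reverse_eq]; revert x; decide

theorem getElem?_tribSub_eq_some_zero_iff {x : Fin 3} {i : ℕ} :
    (tribSub x)[i]? = some 0 ↔ i = 0 := by
  fin_cases x <;> rcases i with _ | _ | i <;> simp [tribSub]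

theorem length_tau (w : List (Fin 3)) : (τ w).length = w.length + w.count 0 + w.count 1 := by
  induction w with
  | nil => rfl
  | cons x w ih => fin_cases x <;>
    simp only [flatMap_cons, tribSub, Fin.isValue, Fin.reduceFinMk, Fin.reduceEq, ↓reduceIte,
      cons_append, nil_append, length_cons, ih, count_cons_self, count_cons_of_ne, ne_eq,
      zero_ne_one, one_ne_zero, not_false_eq_true] <;> omega

theorem count_zero_tau (w : List (Fin 3)) : (τ w).count 0 = w.length := by
  induction w with
  | nil => rfl
  | cons x w ih => fin_cases x <;> simp [tribSub, ih]

theorem count_one_tau (w : List (Fin 3)) : (τ w).count 1 = w.count 0 := by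
  induction w with
  | nil => rfl
  | cons x w ih => fin_cases x <;> simp [tribSub, ih]

theorem tribList_prefix_succ (n : ℕ) : tribList n <+: tribList (n + 1) := by
  induction n with
  | zero => decide
  | succ n ih => exact ih.flatMap tribSub

theorem tribList_prefix_of_le {m n : ℕ} (h : m ≤ n) : tribList m <+: tribList n := by
  induction n, h using Nat.le_induction with
  | base => exact prefix_refl _
  | succ n _ ih => exact ih.trans (tribList_prefix_succ n)

theorem lt_length_tribList (n : ℕ) : n < (tribList n).length := by
  induction n with
  | zero => decide
  | succ n ih =>
    have h0 : 0 < (tribList n).count 0 :=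
      count_pos_iff.2 ((tribList_prefix_of_le n.zero_le).subset (mem_singleton_self 0))
    have := length_tau (tribList n)
    rw [tribList]
    omega

theorem getElem_tribList {m i : ℕ} (h : i < (tribList m).length) :
    (tribList m)[i] = tribWord i := by
  have hi : i < (tribList (i + 1)).length := (lt_length_tribList i).trans_le
    (tribList_prefix_succ i).length_le
  rw [tribWord, getD_eq_getElem _ _ hi]
  rcases le_total m (i + 1) with hm | hm
  · exact (tribList_prefix_of_le hm).getElem h
  · exact ((tribList_prefix_of_le hm).getElem hi).symm

theorem length_tribPrefix (n : ℕ) : (tribPrefix n).length = n := by simp [tribPrefix]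

theorem tribPrefix_succ (n : ℕ) : tribPrefix (n + 1) = tribPrefix n ++ [tribWord n] := by
  simp [tribPrefix, range_succ]

theorem eq_tribPrefix_of_prefix {l : List (Fin 3)} {m : ℕ} (h : l <+: tribList m) :
    l = tribPrefix l.length := by
  refine ext_getElem (length_tribPrefix _).symm fun i h1 h2 => ?_
  rw [h.getElem h1, getElem_tribList]
  simp [tribPrefix]

theorem tribPrefix_prefix_tribList (n : ℕ) : tribPrefix n <+: tribList n := by
  have h := eq_tribPrefix_of_prefix (take_prefix n (tribList n))
  rw [length_take_of_le (lt_length_tribList n).le] at h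
  exact h ▸ take_prefix n (tribList n)

theorem tau_tribPrefix (n : ℕ) : τ (tribPrefix n) = tribPrefix (τ (tribPrefix n)).length :=
  eq_tribPrefix_of_prefix (m := n + 1) ((tribPrefix_prefix_tribList n).flatMap tribSub)

def tauLen (n : ℕ) : ℕ := (τ (tribPrefix n)).length

theorem tribPrefix_tauLen (n : ℕ) : tribPrefix (tauLen n) = τ (tribPrefix n) :=
  (tau_tribPrefix n).symm

theorem tauLen_succ (n : ℕ) : tauLen (n + 1) = tauLen n + (tribSub (tribWord n)).length := by
  simp only [tauLen, tribPrefix_succ, flatMap_append, flatMap_singleton, length_append]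

theorem le_tauLen (n : ℕ) : n ≤ tauLen n := by
  have := length_tau (tribPrefix n)
  rw [length_tribPrefix] at this
  rw [tauLen]
  omega

theorem tauLen_lt_succ (n : ℕ) : tauLen n < tauLen (n + 1) := by
  rw [tauLen_succ]
  exact Nat.lt_add_of_pos_right (length_pos_iff.2 (tribSub_ne_nil _))

theorem exists_tauLen_le_lt (j : ℕ) : ∃ n, tauLen n ≤ j ∧ j < tauLen (n + 1) := by
  induction j with
  | zero => exact ⟨0, le_rfl, tauLen_lt_succ 0⟩
  | succ j ih =>
    obtain ⟨n, h1, h2⟩ := ih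
    rcases (Nat.succ_le_of_lt h2).lt_or_eq with h | h
    · exact ⟨n, by omega, h⟩
    · exact ⟨n + 1, h.ge, by have := tauLen_lt_succ (n + 1); omega⟩

theorem getElem?_tribSub_tribWord {n j : ℕ} (h1 : tauLen n ≤ j) (h2 : j < tauLen (n + 1)) :
    (tribSub (tribWord n))[j - tauLen n]? = some (tribWord j) := by
  have hblock : tribPrefix (tauLen (n + 1)) = tribPrefix (tauLen n) ++ tribSub (tribWord n) := by
    simp only [tribPrefix_tauLen, tribPrefix_succ, flatMap_append, flatMap_singleton]
  have hj : (tribPrefix (tauLen (n + 1)))[j]? = some (tribWord j) := by simp [tribPrefix, h2]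
  rwa [hblock, getElem?_append_right (by rwa [length_tribPrefix]), length_tribPrefix] at hj

theorem tribWord_eq_zero_iff {j : ℕ} : tribWord j = 0 ↔ ∃ n, j = tauLen n := by
  constructor
  · intro hj
    obtain ⟨n, h1, h2⟩ := exists_tauLen_le_lt j
    have := getElem?_tribSub_eq_some_zero_iff.1 (hj ▸ getElem?_tribSub_tribWord h1 h2)
    exact ⟨n, by omega⟩
  · rintro ⟨n, rfl⟩
    have h := getElem?_tribSub_tribWord le_rfl (tauLen_lt_succ n)
    rw [Nat.sub_self, getElem?_tribSub_eq_some_zero_iff.2 rfl] at h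
    exact (Option.some_injective _ h).symm

theorem tribPrefix_tauLen_add_one (n : ℕ) :
    tribPrefix (tauLen n + 1) = τ (tribPrefix n) ++ [0] := by
  rw [tribPrefix_succ, tribPrefix_tauLen, tribWord_eq_zero_iff.2 ⟨n, rfl⟩]

theorem tribWord_eq_zero_of_palindrome {j : ℕ} (h : (tribPrefix (j + 1)).Palindrome) :
    tribWord j = 0 := by
  have h0 : (tribPrefix (j + 1)).head? = some 0 := by
    simp only [tribPrefix, range_succ_eq_map, map_cons, head?_cons]; rfl
  rw [← h.reverse_eq, head?_reverse, tribPrefix_succ] at h0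
  simpa using h0

def palPrefix : ℕ → List (Fin 3)
  | 0 => []
  | m + 1 => τ (palPrefix m) ++ [0]

theorem palindrome_tau_append_zero_iff (w : List (Fin 3)) :
    (τ w ++ [0]).Palindrome ↔ w.Palindrome :=
  palindrome_flatMap_append_singleton_iff tribSub_append_zero_palindrome tau_injective w

theorem palPrefix_palindrome (m : ℕ) : (palPrefix m).Palindrome := by
  induction m with
  | zero => exact .nil
  | succ m ih => exact (palindrome_tau_append_zero_iff _).2 ih

theorem tribPrefix_length_palPrefix (m : ℕ) : tribPrefix (palPrefix m).length = palPrefix m := by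
  induction m with
  | zero => rfl
  | succ m ih => rw [palPrefix, ← ih, ← tribPrefix_tauLen_add_one, length_tribPrefix]

theorem exists_palPrefix_of_palindrome (n : ℕ) (h : (tribPrefix n).Palindrome) :
    ∃ m, tribPrefix n = palPrefix m := by
  induction n using Nat.strong_induction_on with
  | _ n ih =>
  rcases n with _ | j
  · exact ⟨0, rfl⟩
  obtain ⟨k, rfl⟩ := tribWord_eq_zero_iff.1 (tribWord_eq_zero_of_palindrome h)
  rw [tribPrefix_tauLen_add_one] at h ⊢
  obtain ⟨m, hm⟩ := ih k (Nat.lt_succ_of_le (le_tauLen k))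
    ((palindrome_tau_append_zero_iff _).1 h)
  exact ⟨m + 1, by rw [hm, palPrefix]⟩

theorem one_le_ker (n : ℕ) : 1 ≤ ker (n + 1) := by
  suffices ∀ n, 1 ≤ ker (n + 1) ∧ 1 ≤ ker (n + 2) from (this n).1
  intro n
  induction n with
  | zero => decide
  | succ n ih => exact ⟨ih.2, by rw [ker]; omega⟩

theorem ker_add_three_add_one (n : ℕ) : ker (n + 3) + 1 = ker (n + 2) + ker (n + 1) + ker n := by
  rw [ker]
  have : 1 ≤ ker (n + 2) := one_le_ker (n + 1)
  omega

theorem length_palPrefix_add_two (m : ℕ) : (palPrefix m).length + 2 = ker (m + 4) := by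
  suffices (palPrefix m).length + 2 = ker (m + 4) ∧ (palPrefix m).count 0 + 1 = ker (m + 3) ∧
      (palPrefix m).count 1 + 1 = ker (m + 2) from this.1
  induction m with
  | zero => decide
  | succ m ih =>
    have hker : ker (m + 5) + 1 = ker (m + 4) + ker (m + 3) + ker (m + 2) :=
      ker_add_three_add_one (m + 2)
    simp only [palPrefix, length_append, count_append, length_tau, count_zero_tau, count_one_tau,
      length_singleton, count_singleton_self, count_singleton, beq_iff_eq, Fin.isValue,
      Fin.reduceEq, ↓reduceIte, add_zero, Nat.add_assoc, Nat.reduceAdd]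
    omega

/-- `T[1,n]` is a palindrome iff `n = k_{m+4} - 2` for some `m ≥ 1`. -/
theorem tribPrefix_palindrome_iff (n : ℕ) (hn : 1 ≤ n) :
    (tribPrefix n).Palindrome ↔ ∃ m : ℕ, 1 ≤ m ∧ n = ker (m + 4) - 2 := by
  constructor
  · intro h
    obtain ⟨m, hm⟩ := exists_palPrefix_of_palindrome n h
    have hlen : n = (palPrefix m).length := by rw [← hm, length_tribPrefix]
    refine ⟨m, Nat.one_le_iff_ne_zero.2 ?_, by have := length_palPrefix_add_two m; omega⟩
    rintro rfl
    exact Nat.one_le_iff_ne_zero.1 hn hlen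
  · rintro ⟨m, -, rfl⟩
    rw [← length_palPrefix_add_two, Nat.add_sub_cancel, tribPrefix_length_palPrefix]
    exact palPrefix_palindrome m
end
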